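/- Let H be the group with presentation ⟨a, b, c | a^{2^n} = 1, b^{2^m} = a^{2^m}, c^{2^ℓ} = 1, [b,a] = c, [c,a] = c^{-2}, [c,b] = c^{-2}⟩ with n > m > ℓ ≥ 2. Then the centralizer C_H([H,H]) is abelian, equals ⟨a², ab, b², c⟩, and has exponent 2^{n-1}. -/

import Mathlib

/-!
Both `a` and `b` invert `c = [b, a]`, so `⟨c⟩` is normal, `H / ⟨c⟩` is abelian and
`[H, H] = ⟨c⟩`; the centralizer of `[H, H]` is that of `c`. The subgroup
`T = ⟨a², ab, b², c⟩` of words of even degree in `a, b` satisfies `H = T ∪ aT`. Since `a²` and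
`b²` are central and `ab` commutes with `c`, `T` is abelian and centralizes `c`, whereas `a` does
not, because `c ≠ c⁻¹` (as seen in the dihedral group of order `2^(ℓ+2)`). So `C_H([H, H]) = T`.
In `T`, `(ab)² = a²b²c⁻¹` with `b^(2^(n-1)) = a^(2^(n-1))` and `c^(2^(n-2)) = 1`, so every element
has order dividing `2^(n-1)`; and `a²` has order exactly `2^(n-1)`, because `a` maps onto a
generator of `ℤ/2ⁿ`.
-/

open FreeGroup in
/-- Relators of H = G_⚁ = ⟨a,b,c | a^{2^n}=1, b^{2^m}=a^{2^m}, c^{2^ℓ}=1, [b,a]=c,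
[c,a]=c⁻², [c,b]=c⁻²⟩, with convention [b,a] = b⁻¹a⁻¹ba. Generators 0 ↦ a, 1 ↦ b, 2 ↦ c. -/
def relsH2 (n m ℓ : ℕ) : Set (FreeGroup (Fin 3)) :=
  { (of 0) ^ (2 ^ n), (of 1) ^ (2 ^ m) * ((of 0) ^ (2 ^ m))⁻¹, (of 2) ^ (2 ^ ℓ),
    (of 1)⁻¹ * (of 0)⁻¹ * of 1 * of 0 * (of 2)⁻¹,
    (of 2)⁻¹ * (of 0)⁻¹ * of 2 * of 0 * (of 2) ^ 2,
    (of 2)⁻¹ * (of 1)⁻¹ * of 2 * of 1 * (of 2) ^ 2 }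

abbrev H2 (n m ℓ : ℕ) := PresentedGroup (relsH2 n m ℓ)

namespace Subgroup

variable {G : Type*} [Group G]

theorem mem_center_of_closure_eq_top {S : Set G} (hS : closure S = ⊤) {z : G}
    (h : ∀ s ∈ S, s * z = z * s) : z ∈ center G := by
  rw [← centralizer_univ, ← coe_top, ← hS, centralizer_closure]
  exact mem_centralizer_iff.2 h

theorem isMulCommutative_of_closure_eq_top {S : Set G} (hS : closure S = ⊤)
    (h : ∀ x ∈ S, ∀ y ∈ S, x * y = y * x) : IsMulCommutative G := by
  rw [← center_eq_top_iff, eq_top_iff, ← hS, closure_le]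
  exact fun x hx ↦ mem_center_of_closure_eq_top hS fun y hy ↦ h y hy x hx

theorem commutator_le_of_closure_eq_top {S : Set G} (hS : closure S = ⊤) (N : Subgroup G)
    [N.Normal] (h : ∀ x ∈ S, ∀ y ∈ S, Commute (x : G ⧸ N) y) : _root_.commutator G ≤ N := by
  refine Normal.quotient_commutative_iff_commutator_le.mp
    (isMulCommutative_of_closure_eq_top (S := QuotientGroup.mk' N '' S) ?_ ?_)
  · rw [← MonoidHom.map_closure, hS, ← MonoidHom.range_eq_map, MonoidHom.range_eq_top]
    exact QuotientGroup.mk'_surjective N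
  · rintro - ⟨x, hx, rfl⟩ - ⟨y, hy, rfl⟩
    exact h x hx y hy

theorem zpowers_normal_of_closure_eq_top {S : Set G} (hS : closure S = ⊤) {c : G}
    (h : ∀ s ∈ S, s * c * s⁻¹ = c ∨ s * c * s⁻¹ = c⁻¹) : (zpowers c).Normal := by
  rw [← normalizer_eq_top_iff, eq_top_iff, ← hS, closure_le]
  intro s hs
  rw [SetLike.mem_coe, mem_normalizer_iff_map_conj_eq, MonoidHom.map_zpowers]
  rcases h s hs with h | h <;> simp [MulAut.conj_apply, h]

/-- The hypothesis says that left multiplication by each generator and its inverse maps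
`T ∪ g • T` into itself. -/
theorem mem_or_inv_mul_mem_of_closure_eq_top {S : Set G} (hS : closure S = ⊤) {T : Subgroup G}
    {g : G} (h : ∀ s ∈ S, (s ∈ T ∧ g⁻¹ * s * g ∈ T) ∨ (g⁻¹ * s ∈ T ∧ s * g ∈ T)) (x : G) :
    x ∈ T ∨ g⁻¹ * x ∈ T := by
  have hx : x ∈ closure S := hS ▸ mem_top x
  induction hx using closure_induction_left with
  | one => exact .inl T.one_mem
  | mul_left s hs y _ ih =>
    rcases h s hs with ⟨hs, hsg⟩ | ⟨hgs, hsg⟩ <;> rcases ih with hy | hy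
    · exact .inl (mul_mem hs hy)
    · exact .inr (by simpa [mul_assoc] using mul_mem hsg hy)
    · exact .inr (by simpa [mul_assoc] using mul_mem hgs hy)
    · exact .inl (by simpa [mul_assoc] using mul_mem hsg hy)
  | inv_mul_cancel s hs y _ ih =>
    rcases h s hs with ⟨hs, hsg⟩ | ⟨hgs, hsg⟩ <;> rcases ih with hy | hy
    · exact .inl (mul_mem (inv_mem hs) hy)
    · exact .inr (by simpa [mul_assoc] using mul_mem (inv_mem hsg) hy)
    · exact .inr (by simpa [mul_assoc] using mul_mem (inv_mem hsg) hy)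
    · exact .inl (by simpa [mul_assoc] using mul_mem (inv_mem hgs) hy)

theorem pow_eq_one_of_mem_closure {S : Set G} (hS : ∀ x ∈ S, ∀ y ∈ S, x * y = y * x) {k : ℕ}
    (hk : ∀ s ∈ S, s ^ k = 1) {x : G} (hx : x ∈ closure S) : x ^ k = 1 := by
  have := isMulCommutative_closure hS
  induction hx using closure_induction with
  | mem s hs => exact hk s hs
  | one => exact one_pow k
  | mul x y hx hy ihx ihy =>
    rw [Commute.mul_pow (setLike_mul_comm hx hy), ihx, ihy, one_mul]
  | inv x _ ih => rw [inv_pow, ih, inv_one]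

end Subgroup

theorem SemiconjBy.commute_mul_of_inv {G : Type*} [Group G] {x y c : G}
    (hx : SemiconjBy x c c⁻¹) (hy : SemiconjBy y c c⁻¹) : Commute (x * y) c := by
  have := hx.inv_right.mul_left hy
  rwa [inv_inv] at this

theorem semiconjBy_inv_of_mul_eq_one {G : Type*} [Group G] {x c : G}
    (h : c⁻¹ * x⁻¹ * c * x * c ^ 2 = 1) : SemiconjBy x c⁻¹ c :=
  calc x * c⁻¹ = x * c * (c⁻¹ * x⁻¹ * c * x * c ^ 2) * c⁻¹ ^ 2 := by rw [h]; group
    _ = c * x := by group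

namespace H2

open Subgroup
open FreeGroup (of lift lift_apply_of)
open scoped commutatorElement

variable {n m ℓ : ℕ}

local notation "𝕒" => (PresentedGroup.of (rels := relsH2 n m ℓ) 0)
local notation "𝕓" => (PresentedGroup.of (rels := relsH2 n m ℓ) 1)
local notation "𝕔" => (PresentedGroup.of (rels := relsH2 n m ℓ) 2)

theorem a_pow_two_pow : 𝕒 ^ 2 ^ n = 1 :=
  PresentedGroup.one_of_mem (x := of 0 ^ 2 ^ n) (by simp [relsH2])

theorem b_pow_two_pow : 𝕓 ^ 2 ^ m = 𝕒 ^ 2 ^ m :=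
  PresentedGroup.mk_eq_mk_of_mul_inv_mem (x := of 1 ^ 2 ^ m) (y := of 0 ^ 2 ^ m)
    (by simp [relsH2])

theorem c_pow_two_pow : 𝕔 ^ 2 ^ ℓ = 1 :=
  PresentedGroup.one_of_mem (x := of 2 ^ 2 ^ ℓ) (by simp [relsH2])

theorem b_mul_a : 𝕓 * 𝕒 = 𝕒 * 𝕓 * 𝕔 := by
  have h : 𝕓⁻¹ * 𝕒⁻¹ * 𝕓 * 𝕒 * 𝕔⁻¹ = 1 := PresentedGroup.one_of_mem
    (x := (of 1)⁻¹ * (of 0)⁻¹ * of 1 * of 0 * (of 2)⁻¹) (by simp [relsH2])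
  calc 𝕓 * 𝕒 = 𝕒 * 𝕓 * (𝕓⁻¹ * 𝕒⁻¹ * 𝕓 * 𝕒 * 𝕔⁻¹) * 𝕔 := by group
    _ = 𝕒 * 𝕓 * 𝕔 := by rw [h, mul_one]

theorem semiconjBy_a_inv_c : SemiconjBy 𝕒 𝕔⁻¹ 𝕔 :=
  semiconjBy_inv_of_mul_eq_one <| PresentedGroup.one_of_mem
    (x := (of 2)⁻¹ * (of 0)⁻¹ * of 2 * of 0 * of 2 ^ 2) (by simp [relsH2])

theorem semiconjBy_b_inv_c : SemiconjBy 𝕓 𝕔⁻¹ 𝕔 :=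
  semiconjBy_inv_of_mul_eq_one <| PresentedGroup.one_of_mem
    (x := (of 2)⁻¹ * (of 1)⁻¹ * of 2 * of 1 * of 2 ^ 2) (by simp [relsH2])

theorem semiconjBy_a_c : SemiconjBy 𝕒 𝕔 𝕔⁻¹ := by
  simpa using (semiconjBy_a_inv_c (n := n) (m := m) (ℓ := ℓ)).inv_right

theorem semiconjBy_b_c : SemiconjBy 𝕓 𝕔 𝕔⁻¹ := by
  simpa using (semiconjBy_b_inv_c (n := n) (m := m) (ℓ := ℓ)).inv_right

theorem closure_generators : closure {𝕒, 𝕓, 𝕔} = ⊤ := by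
  rw [← PresentedGroup.closure_range_of]
  congr
  ext
  simp [Fin.exists_fin_succ, eq_comm]

theorem b_pow_two_pow_of_le {k : ℕ} (hk : m ≤ k) : 𝕓 ^ 2 ^ k = 𝕒 ^ 2 ^ k := by
  obtain ⟨j, rfl⟩ := Nat.exists_eq_add_of_le hk
  rw [pow_add, pow_mul, pow_mul, b_pow_two_pow]

theorem c_pow_two_pow_of_le {k : ℕ} (hk : ℓ ≤ k) : 𝕔 ^ 2 ^ k = 1 := by
  obtain ⟨j, rfl⟩ := Nat.exists_eq_add_of_le hk
  rw [pow_add, pow_mul, c_pow_two_pow, one_pow]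

theorem semiconjBy_a_b_mul_c : SemiconjBy 𝕒 (𝕓 * 𝕔) 𝕓 := by
  rw [SemiconjBy, ← mul_assoc, b_mul_a]

theorem semiconjBy_a_b : SemiconjBy 𝕒 𝕓 (𝕓 * 𝕔) := by
  simpa using semiconjBy_a_b_mul_c.mul_right (semiconjBy_a_inv_c (n := n) (m := m) (ℓ := ℓ))

theorem commute_a_sq_b : Commute (𝕒 ^ 2) 𝕓 := by
  rw [sq]
  exact semiconjBy_a_b_mul_c.mul_left semiconjBy_a_b

theorem commute_a_b_sq : Commute 𝕒 (𝕓 ^ 2) := by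
  have h : (𝕓 * 𝕔) ^ 2 = 𝕓 ^ 2 := by
    rw [sq, sq, mul_assoc, ← mul_assoc 𝕔, ← semiconjBy_b_inv_c.eq]
    group
  have := (semiconjBy_a_b (n := n) (m := m) (ℓ := ℓ)).pow_right 2
  rwa [h] at this

theorem commute_a_sq_c : Commute (𝕒 ^ 2) 𝕔 := by
  rw [sq]
  exact semiconjBy_a_c.commute_mul_of_inv semiconjBy_a_c

theorem commute_b_sq_c : Commute (𝕓 ^ 2) 𝕔 := by
  rw [sq]
  exact semiconjBy_b_c.commute_mul_of_inv semiconjBy_b_c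

theorem commute_a_mul_b_c : Commute (𝕒 * 𝕓) 𝕔 :=
  semiconjBy_a_c.commute_mul_of_inv semiconjBy_b_c

theorem sq_a_mul_b : (𝕒 * 𝕓) ^ 2 = 𝕒 ^ 2 * 𝕓 ^ 2 * 𝕔⁻¹ :=
  calc (𝕒 * 𝕓) ^ 2 = 𝕒 * (𝕓 * 𝕒) * 𝕓 := by rw [sq]; group
    _ = 𝕒 * 𝕒 * 𝕓 * (𝕔 * 𝕓) := by rw [b_mul_a]; group
    _ = 𝕒 ^ 2 * 𝕓 ^ 2 * 𝕔⁻¹ := by rw [← semiconjBy_b_inv_c.eq, sq, sq]; group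

theorem a_sq_mem_center : 𝕒 ^ 2 ∈ center (H2 n m ℓ) := by
  refine mem_center_of_closure_eq_top closure_generators ?_
  rintro s (rfl | rfl | rfl)
  exacts [(Commute.self_pow _ 2).eq, commute_a_sq_b.eq.symm, commute_a_sq_c.eq.symm]

theorem b_sq_mem_center : 𝕓 ^ 2 ∈ center (H2 n m ℓ) := by
  refine mem_center_of_closure_eq_top closure_generators ?_
  rintro s (rfl | rfl | rfl)
  exacts [commute_a_b_sq.eq, (Commute.self_pow _ 2).eq, commute_b_sq_c.eq.symm]

theorem c_mem_commutator : 𝕔 ∈ commutator (H2 n m ℓ) := by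
  have h : 𝕔 = ⁅𝕓⁻¹, 𝕒⁻¹⁆ := by
    rw [commutatorElement_def, inv_inv, inv_inv, mul_assoc _ 𝕓, b_mul_a]
    group
  rw [h, _root_.commutator_def]
  exact commutator_mem_commutator (mem_top _) (mem_top _)

instance zpowers_c_normal : (zpowers 𝕔).Normal := by
  refine zpowers_normal_of_closure_eq_top closure_generators ?_
  rintro s (rfl | rfl | rfl)
  · exact .inr (by rw [semiconjBy_a_c.eq, mul_inv_cancel_right])
  · exact .inr (by rw [semiconjBy_b_c.eq, mul_inv_cancel_right])
  · exact .inl (mul_inv_cancel_right _ _)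

theorem commutator_le_zpowers_c : commutator (H2 n m ℓ) ≤ zpowers 𝕔 := by
  have hc : (𝕔 : H2 n m ℓ ⧸ zpowers 𝕔) = 1 := (QuotientGroup.eq_one_iff _).2 (mem_zpowers _)
  have hab : Commute (𝕒 : H2 n m ℓ ⧸ zpowers 𝕔) 𝕓 := by
    rw [Commute, SemiconjBy, ← QuotientGroup.mk_mul, ← QuotientGroup.mk_mul, b_mul_a]
    simp
  refine commutator_le_of_closure_eq_top closure_generators _ ?_
  rintro x (rfl | rfl | rfl) y (rfl | rfl | rfl)
  all_goals first
    | exact Commute.refl _ | exact hab | exact hab.symm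
    | (rw [hc]; exact Commute.one_left _) | (rw [hc]; exact Commute.one_right _)

theorem centralizer_commutator_eq_centralizer_c :
    centralizer (commutator (H2 n m ℓ) : Set (H2 n m ℓ)) = centralizer {𝕔} := by
  refine le_antisymm (centralizer_le (Set.singleton_subset_iff.2 c_mem_commutator)) ?_
  rw [← centralizer_closure, ← zpowers_eq_closure]
  exact centralizer_le commutator_le_zpowers_c

open DihedralGroup in
theorem lift_dihedral_rels (hn : n ≠ 0) (hm : m ≠ 0) (w : FreeGroup (Fin 3))
    (hw : w ∈ relsH2 n m ℓ) : lift ![sr 1, sr 0, r 2] w = (1 : DihedralGroup (2 ^ (ℓ + 1))) := by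
  have hsr (i : ZMod (2 ^ (ℓ + 1))) {k : ℕ} (hk : k ≠ 0) : sr i ^ 2 ^ k = 1 :=
    orderOf_dvd_iff_pow_eq_one.1 (by rw [orderOf_sr]; exact dvd_pow_self 2 hk)
  simp only [relsH2, Set.mem_insert_iff, Set.mem_singleton_iff] at hw
  rcases hw with rfl | rfl | rfl | rfl | rfl | rfl
  · simp [hsr _ hn]
  · simp [hsr _ hm]
  all_goals
    simp only [map_mul, map_inv, map_pow, lift_apply_of, Matrix.cons_val_zero, Matrix.cons_val_one,
      Matrix.cons_val, inv_sr, inv_r, sr_mul_sr, r_mul_sr, sr_mul_r, r_mul_r, r_pow, ← r_zero,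
      r.injEq]
  · simpa [pow_succ'] using ZMod.natCast_self (2 ^ (ℓ + 1))
  all_goals ring

theorem c_sq_ne_one (hn : n ≠ 0) (hm : m ≠ 0) (hℓ : 2 ≤ ℓ) : 𝕔 ^ 2 ≠ 1 := by
  intro h
  have hr := congrArg (PresentedGroup.toGroup (lift_dihedral_rels (ℓ := ℓ) hn hm)) h
  simp only [map_pow, PresentedGroup.toGroup.of, Matrix.cons_val, DihedralGroup.r_pow, map_one,
    ← DihedralGroup.r_zero, DihedralGroup.r.injEq] at hr
  have h4 : ((4 : ℕ) : ZMod (2 ^ (ℓ + 1))) = 0 := by rw [← hr]; norm_num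
  have := Nat.le_of_dvd (by norm_num) ((ZMod.natCast_eq_zero_iff _ _).1 h4)
  have := Nat.pow_le_pow_right (show 0 < 2 by norm_num) (show 3 ≤ ℓ + 1 by omega)
  omega

theorem not_commute_a_c (hn : n ≠ 0) (hm : m ≠ 0) (hℓ : 2 ≤ ℓ) : ¬Commute 𝕒 𝕔 := by
  intro h
  have hc : 𝕔⁻¹ = 𝕔 := mul_right_cancel (semiconjBy_a_c.eq.symm.trans h.eq)
  exact c_sq_ne_one hn hm hℓ (sq 𝕔 ▸ inv_eq_iff_mul_eq_one.1 hc)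

theorem lift_zmod_rels (w : FreeGroup (Fin 3)) (hw : w ∈ relsH2 n m ℓ) :
    lift ![.ofAdd 1, .ofAdd 1, 1] w = (1 : Multiplicative (ZMod (2 ^ n))) := by
  simp only [relsH2, Set.mem_insert_iff, Set.mem_singleton_iff] at hw
  rcases hw with rfl | rfl | rfl | rfl | rfl | rfl <;>
    simp [← ofAdd_nsmul, ← ofAdd_neg, ← ofAdd_add]

theorem orderOf_a : orderOf 𝕒 = 2 ^ n := by
  refine Nat.dvd_antisymm (orderOf_dvd_of_pow_eq_one a_pow_two_pow) ?_
  have := orderOf_map_dvd (PresentedGroup.toGroup (lift_zmod_rels (n := n) (m := m) (ℓ := ℓ))) 𝕒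
  rwa [PresentedGroup.toGroup.of, Matrix.cons_val_zero, orderOf_ofAdd_eq_addOrderOf,
    ZMod.addOrderOf_one] at this

theorem orderOf_a_sq (hn : n ≠ 0) : orderOf (𝕒 ^ 2) = 2 ^ (n - 1) := by
  obtain ⟨k, rfl⟩ := Nat.exists_eq_add_of_lt (Nat.pos_of_ne_zero hn)
  rw [orderOf_pow_of_dvd two_ne_zero (orderOf_a ▸ dvd_pow_self 2 hn), orderOf_a]
  simp [pow_succ]

abbrev evenGenerators : Set (H2 n m ℓ) := {𝕒 ^ 2, 𝕒 * 𝕓, 𝕓 ^ 2, 𝕔}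

/-- The words of even total degree in `a` and `b`: a subgroup of index two, with `a` representing
the other coset. -/
abbrev evenSubgroup : Subgroup (H2 n m ℓ) := closure evenGenerators

theorem evenGenerators_comm :
    ∀ x ∈ evenGenerators (n := n) (m := m) (ℓ := ℓ), ∀ y ∈ evenGenerators, x * y = y * x := by
  have ha := mem_center_iff.1 (a_sq_mem_center (n := n) (m := m) (ℓ := ℓ))
  have hb := mem_center_iff.1 (b_sq_mem_center (n := n) (m := m) (ℓ := ℓ))
  rintro x (rfl | rfl | rfl | rfl) y (rfl | rfl | rfl | rfl)
  all_goals first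
    | rfl | exact ha _ | exact (ha _).symm | exact hb _ | exact (hb _).symm
    | exact commute_a_mul_b_c.eq | exact commute_a_mul_b_c.eq.symm

instance evenSubgroup_isMulCommutative :
    IsMulCommutative (evenSubgroup (n := n) (m := m) (ℓ := ℓ)) :=
  isMulCommutative_closure evenGenerators_comm

theorem evenSubgroup_le_centralizer_c : evenSubgroup ≤ centralizer {𝕔} := by
  rw [closure_le]
  rintro s (rfl | rfl | rfl | rfl) <;> rw [SetLike.mem_coe, mem_centralizer_singleton_iff]
  exacts [commute_a_sq_c.eq, commute_a_mul_b_c.eq, commute_b_sq_c.eq]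

theorem mem_evenSubgroup_or_inv_a_mul_mem (x : H2 n m ℓ) :
    x ∈ evenSubgroup ∨ 𝕒⁻¹ * x ∈ evenSubgroup := by
  have ha : 𝕒 ^ 2 ∈ evenSubgroup (n := n) (m := m) (ℓ := ℓ) := subset_closure (by simp)
  have hab : 𝕒 * 𝕓 ∈ evenSubgroup (n := n) (m := m) (ℓ := ℓ) := subset_closure (by simp)
  have hc : 𝕔 ∈ evenSubgroup (n := n) (m := m) (ℓ := ℓ) := subset_closure (by simp)
  refine mem_or_inv_mul_mem_of_closure_eq_top closure_generators ?_ x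
  rintro s (rfl | rfl | rfl)
  · exact .inr ⟨by simp, by rwa [← sq]⟩
  · refine .inr ⟨by simpa [sq, mul_assoc] using mul_mem (inv_mem ha) hab, ?_⟩
    rw [b_mul_a]
    exact mul_mem hab hc
  · refine .inl ⟨hc, ?_⟩
    rw [mul_assoc, ← semiconjBy_a_inv_c.eq, inv_mul_cancel_left]
    exact inv_mem hc

theorem centralizer_commutator_eq_evenSubgroup (hn : n ≠ 0) (hm : m ≠ 0) (hℓ : 2 ≤ ℓ) :
    centralizer (commutator (H2 n m ℓ) : Set (H2 n m ℓ)) = evenSubgroup := by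
  rw [centralizer_commutator_eq_centralizer_c]
  refine le_antisymm (fun x hx ↦ ?_) evenSubgroup_le_centralizer_c
  refine (mem_evenSubgroup_or_inv_a_mul_mem x).resolve_right fun h ↦ not_commute_a_c hn hm hℓ ?_
  have hx' : Commute x 𝕔 := mem_centralizer_singleton_iff.1 hx
  have h' : Commute (𝕒⁻¹ * x) 𝕔 :=
    mem_centralizer_singleton_iff.1 (evenSubgroup_le_centralizer_c h)
  simpa using hx'.mul_left h'.inv_left

theorem pow_two_pow_pred_eq_one (hmn : m < n) (hℓn : ℓ + 2 ≤ n) {x : H2 n m ℓ}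
    (hx : x ∈ evenSubgroup) : x ^ 2 ^ (n - 1) = 1 := by
  have hsucc : n - 1 + 1 = n := by omega
  have h2 : 2 ^ (n - 1) = 2 * 2 ^ (n - 2) := by rw [← pow_succ']; congr 1; omega
  have ha : 𝕒 ^ 2 ^ (n - 1) * 𝕒 ^ 2 ^ (n - 1) = 1 := by
    rw [← pow_add, ← two_mul, ← pow_succ', hsucc, a_pow_two_pow]
  refine pow_eq_one_of_mem_closure evenGenerators_comm ?_ hx
  rintro s (rfl | rfl | rfl | rfl)
  · rw [← pow_mul, ← pow_succ', hsucc, a_pow_two_pow]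
  · have hcomm : Commute (𝕒 ^ 2 * 𝕓 ^ 2) 𝕔⁻¹ :=
      (commute_a_sq_c.mul_left commute_b_sq_c).inv_right
    rw [h2, pow_mul, sq_a_mul_b, hcomm.mul_pow, (commute_a_sq_b.pow_right 2).mul_pow, ← pow_mul,
      ← pow_mul, ← h2, b_pow_two_pow_of_le (by omega), inv_pow, c_pow_two_pow_of_le (by omega),
      inv_one, mul_one, ha]
  · rw [← pow_mul, ← pow_succ', hsucc, b_pow_two_pow_of_le hmn.le, a_pow_two_pow]
  · exact c_pow_two_pow_of_le (by omega)

theorem exponent_evenSubgroup (hmn : m < n) (hℓn : ℓ + 2 ≤ n) :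
    Monoid.exponent (evenSubgroup (n := n) (m := m) (ℓ := ℓ)) = 2 ^ (n - 1) := by
  refine Nat.dvd_antisymm (Monoid.exponent_dvd_of_forall_pow_eq_one fun x ↦ ?_) ?_
  · exact Subtype.ext (by simpa using pow_two_pow_pred_eq_one hmn hℓn x.2)
  · rw [← orderOf_a_sq (by omega), ← Subgroup.orderOf_mk _ (subset_closure (Set.mem_insert _ _))]
    exact Monoid.order_dvd_exponent _

end H2

/-- For n > m > ℓ ≥ 2, the centralizer of the derived subgroup of H = G_⚁
equals ⟨a², ab, b², c⟩, is abelian, and has exponent 2^{n-1}. -/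
theorem stmt4 (n m ℓ : ℕ) (hℓ : 2 ≤ ℓ) (hmℓ : ℓ < m) (hnm : m < n) :
    Subgroup.centralizer ((commutator (H2 n m ℓ) : Subgroup (H2 n m ℓ)) : Set (H2 n m ℓ)) =
      Subgroup.closure {(PresentedGroup.of 0 : H2 n m ℓ) ^ 2,
        PresentedGroup.of 0 * PresentedGroup.of 1,
        (PresentedGroup.of 1 : H2 n m ℓ) ^ 2, PresentedGroup.of 2} ∧
    (∀ u ∈ Subgroup.centralizer ((commutator (H2 n m ℓ) : Subgroup (H2 n m ℓ)) : Set (H2 n m ℓ)),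
      ∀ v ∈ Subgroup.centralizer ((commutator (H2 n m ℓ) : Subgroup (H2 n m ℓ)) : Set (H2 n m ℓ)),
        u * v = v * u) ∧
    Monoid.exponent
      (Subgroup.centralizer ((commutator (H2 n m ℓ) : Subgroup (H2 n m ℓ)) : Set (H2 n m ℓ))) =
      2 ^ (n - 1) := by
  rw [H2.centralizer_commutator_eq_evenSubgroup (by omega) (by omega) hℓ]
  exact ⟨rfl, fun u hu v hv ↦ setLike_mul_comm hu hv, H2.exponent_evenSubgroup hnm (by omega)⟩
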